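/- arXiv:1501.06240 — 2 statements merged into one kernel-verified Lean document; each statement's English description precedes it below -/
import Mathlib

section
/- Let f_A = D_{M_{A+1}} - D_{M_A} and let N \leq A. Then for every x \in G_m, S_{M_N}(|\sigma_{M_{A+1}} f_A|)(x) \geq c \, D_{M_N}(x) for an absolute constant c > 0. -/
open MeasureTheory Complex Filter
open scoped Classical
open scoped ENNReal NNReal

noncomputable section

def vM (m : ℕ → ℕ) : ℕ → ℕ
  | 0 => 1
  | n + 1 => m n * vM m n

abbrev VG (m : ℕ → ℕ) := ∀ k : ℕ, Fin (m k)

def vdigit (m : ℕ → ℕ) (n j : ℕ) : ℕ := (n / vM m j) % m j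

def vpsi (m : ℕ → ℕ) (n : ℕ) (x : VG m) : ℂ :=
  ∏ k ∈ Finset.range (n + 1),
    Complex.exp (2 * Real.pi * Complex.I * (vdigit m n k) * ((x k : ℕ) : ℂ) / (m k))

def vD (m : ℕ → ℕ) (n : ℕ) (x : VG m) : ℂ := ∑ k ∈ Finset.range n, vpsi m k x

variable {m : ℕ → ℕ}

def vCoeff (μ : Measure (VG m)) (f : VG m → ℂ) (i : ℕ) : ℂ :=
  ∫ x, f x * (starRingEnd ℂ) (vpsi m i x) ∂μ

def vS (μ : Measure (VG m)) (f : VG m → ℂ) (n : ℕ) (x : VG m) : ℂ :=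
  ∑ k ∈ Finset.range n, vCoeff μ f k * vpsi m k x

def vSigma (μ : Measure (VG m)) (f : VG m → ℂ) (n : ℕ) (x : VG m) : ℂ :=
  (n : ℂ)⁻¹ * ∑ k ∈ Finset.Icc 1 n, vS μ f k x

def vCyl (m : ℕ → ℕ) (n : ℕ) (x : VG m) : Set (VG m) := {y | ∀ i < n, y i = x i}

def vI (m : ℕ → ℕ) (n : ℕ) : Set (VG m) := {y | ∀ i < n, (y i : ℕ) = 0}

def isVHaar (μ : Measure (VG m)) : Prop :=
  ∀ n (x : VG m), μ (vCyl m n x) = ((vM m n : ℝ≥0∞))⁻¹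

def vHp (μ : Measure (VG m)) (p : ℝ) (f : VG m → ℂ) : ℝ≥0∞ :=
  (∫⁻ x, (⨆ k, ENNReal.ofReal ‖vS μ f (vM m k) x‖) ^ p ∂μ) ^ (1 / p)

def vLpE (μ : Measure (VG m)) (p : ℝ) (g : VG m → ℝ≥0∞) : ℝ≥0∞ :=
  (∫⁻ x, (g x) ^ p ∂μ) ^ (1 / p)

/-- `|σ_{M_{A+1}} f_A|` as a complex-valued function. -/
def sigAbsFA (μ : Measure (VG m)) (A : ℕ) (t : VG m) : ℂ :=
  ((‖vSigma μ (fun y => vD m (vM m (A + 1)) y - vD m (vM m A) y) (vM m (A + 1)) t‖ : ℝ) : ℂ)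


/-!
On `I_{A+1}` every character `ψ_k` with `k < M_{A+1}` equals `1`, and by orthonormality the
Fourier coefficients of `f_A` are the indicator of `[M_A, M_{A+1})`. Hence `S_k f_A = (k - M_A)₊`
there, and averaging gives `σ_{M_{A+1}} f_A ≥ M_A / 4` on `I_{A+1}`. On the other hand
`S_{M_N} g (x) = M_N ∫_{I_N(x)} g` and `D_{M_N} = M_N 𝟙_{I_N}`. For `x ∈ I_N` the cylinder
`I_N(x)` contains `I_{A+1}`, so `S_{M_N} |σ_{M_{A+1}} f_A| (x) ≥ M_N · M_A / (4 M_{A+1})`, and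
`M_{A+1} = m_A M_A ≤ B M_A` for a bound `B` of the `m_k`; off `I_N` the left side vanishes.
-/
lemma IsPrimitiveRoot.sum_pow_mul_conj_pow {ζ : ℂ} {M a b : ℕ} (hζ : IsPrimitiveRoot ζ M)
    (ha : a < M) (hb : b < M) :
    ∑ j ∈ Finset.range M, ζ ^ (j * a) * starRingEnd ℂ (ζ ^ (j * b))
      = if a = b then (M : ℂ) else 0 := by
  have hnorm (k : ℕ) : ‖ζ ^ k‖ = 1 := by rw [norm_pow, hζ.norm'_eq_one (by omega), one_pow]
  have hterm (j : ℕ) : ζ ^ (j * a) * starRingEnd ℂ (ζ ^ (j * b)) = (ζ ^ a / ζ ^ b) ^ j := by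
    rw [← Complex.inv_eq_conj (hnorm _), div_pow, ← pow_mul, ← pow_mul, mul_comm a, mul_comm b,
      div_eq_mul_inv]
  simp_rw [hterm]
  split_ifs with hab
  · simp [hab, div_self (pow_ne_zero _ (hζ.ne_zero (by omega)))]
  · have hw1 : ζ ^ a / ζ ^ b ≠ 1 := fun h =>
      hab (hζ.pow_inj ha hb (div_eq_one_iff_eq (pow_ne_zero _ (hζ.ne_zero (by omega))) |>.1 h))
    rw [geom_sum_eq hw1, div_pow, ← pow_mul, ← pow_mul, mul_comm a, mul_comm b, pow_mul,
      pow_mul, hζ.pow_eq_one, one_pow, one_pow, div_one, sub_self, zero_div]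

namespace Vilenkin

variable {m : ℕ → ℕ}

lemma vM_succ (n : ℕ) : vM m (n + 1) = m n * vM m n := rfl

lemma vM_eq_prod (n : ℕ) : vM m n = ∏ i ∈ Finset.range n, m i := by
  induction n with
  | zero => rfl
  | succ n ih => rw [vM_succ, Finset.prod_range_succ, ih, mul_comm]

lemma vM_pos (hm : ∀ k, 2 ≤ m k) (n : ℕ) : 0 < vM m n := by
  rw [vM_eq_prod]
  exact Finset.prod_pos fun i _ => two_pos.trans_le (hm i)

lemma vM_dvd_vM {i j : ℕ} (h : i ≤ j) : vM m i ∣ vM m j := by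
  rw [vM_eq_prod, vM_eq_prod]
  exact Finset.prod_dvd_prod_of_subset _ _ _ (Finset.range_subset_range.2 h)

lemma vM_mono (hm : ∀ k, 2 ≤ m k) : Monotone (vM m) :=
  fun _ j h => Nat.le_of_dvd (vM_pos hm j) (vM_dvd_vM h)

lemma lt_vM_self (hm : ∀ k, 2 ≤ m k) (n : ℕ) : n < vM m n := by
  calc n < 2 ^ n := Nat.lt_two_pow_self
    _ ≤ vM m n := by
      simpa [vM_eq_prod] using Finset.pow_card_le_prod (Finset.range n) m 2 fun i _ => hm i

lemma vdigit_eq_zero_of_lt {k i : ℕ} (h : k < vM m i) : vdigit m k i = 0 := by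
  simp [vdigit, Nat.div_eq_of_lt h]

lemma mod_vM_eq_sum_vdigit (k n : ℕ) :
    k % vM m n = ∑ i ∈ Finset.range n, vdigit m k i * vM m i := by
  induction n with
  | zero => simp [vM, Nat.mod_one]
  | succ n ih => rw [vM_succ, mul_comm, Nat.mod_mul, ih, Finset.sum_range_succ, vdigit, mul_comm]

lemma eq_of_vdigit_eq {n a b : ℕ} (ha : a < vM m n) (hb : b < vM m n)
    (h : ∀ i < n, vdigit m a i = vdigit m b i) : a = b := by
  rw [← Nat.mod_eq_of_lt ha, ← Nat.mod_eq_of_lt hb, mod_vM_eq_sum_vdigit, mod_vM_eq_sum_vdigit]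
  exact Finset.sum_congr rfl fun i hi => by rw [h i (Finset.mem_range.1 hi)]

lemma vdigit_lt (hm : ∀ k, 2 ≤ m k) (k i : ℕ) : vdigit m k i < m i :=
  Nat.mod_lt _ (two_pos.trans_le (hm i))

/-- The digit map is a bijection from `range (vM m n)` onto the digit tuples. -/
lemma sum_prod_vdigit {R : Type*} [CommSemiring R] (hm : ∀ k, 2 ≤ m k) (n : ℕ)
    (F : ℕ → ℕ → R) :
    ∑ k ∈ Finset.range (vM m n), ∏ i ∈ Finset.range n, F i (vdigit m k i)
      = ∏ i ∈ Finset.range n, ∑ a ∈ Finset.range (m i), F i a := by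
  set digits : ℕ → Fin n → ℕ := fun k i => vdigit m k i
  have maps_to : ∀ k ∈ Finset.range (vM m n),
      digits k ∈ Fintype.piFinset fun i : Fin n => Finset.range (m i) :=
    fun k _ => Fintype.mem_piFinset.2 fun i => Finset.mem_range.2 (vdigit_lt hm k i)
  have inj : Set.InjOn digits (Finset.range (vM m n)) := fun a ha b hb hab =>
    eq_of_vdigit_eq (Finset.mem_range.1 ha) (Finset.mem_range.1 hb) fun i hi =>
      congrFun hab ⟨i, hi⟩
  have card : (Fintype.piFinset fun i : Fin n => Finset.range (m i)).card
      ≤ (Finset.range (vM m n)).card := by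
    simp [Fintype.card_piFinset, vM_eq_prod, Fin.prod_univ_eq_prod_range (fun i => m i)]
  rw [← Fin.prod_univ_eq_prod_range (fun i => ∑ a ∈ Finset.range (m i), F i a),
    Finset.prod_univ_sum]
  refine Finset.sum_nbij digits maps_to inj (fun v hv => ?_) fun k _ => ?_
  · obtain ⟨k, hk, rfl⟩ := Finset.surj_on_of_inj_on_of_card_le (fun k _ => digits k) maps_to
      (fun a b ha hb hab => inj ha hb hab) card v hv
    exact ⟨k, hk, rfl⟩
  · exact (Fin.prod_univ_eq_prod_range (fun i => F i (vdigit m k i)) n).symm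

def vzeta (m : ℕ → ℕ) (i : ℕ) : ℂ := Complex.exp (2 * Real.pi * Complex.I / m i)

lemma isPrimitiveRoot_vzeta (hm : ∀ k, 2 ≤ m k) (i : ℕ) : IsPrimitiveRoot (vzeta m i) (m i) :=
  Complex.isPrimitiveRoot_exp _ (by have := hm i; omega)

lemma vpsi_eq_prod_range_succ (k : ℕ) (x : VG m) :
    vpsi m k x = ∏ i ∈ Finset.range (k + 1), vzeta m i ^ (vdigit m k i * x i) := by
  refine Finset.prod_congr rfl fun i _ => ?_
  rw [vzeta, ← Complex.exp_nat_mul]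
  push_cast
  ring_nf

lemma vpsi_eq_prod (hm : ∀ k, 2 ≤ m k) {k n : ℕ} (hk : k < vM m n) (x : VG m) :
    vpsi m k x = ∏ i ∈ Finset.range n, vzeta m i ^ (vdigit m k i * x i) := by
  have extend {N₁ N₂ : ℕ} (hN : N₁ ≤ N₂) (hk : k < vM m N₁) :
      ∏ i ∈ Finset.range N₁, vzeta m i ^ (vdigit m k i * x i)
        = ∏ i ∈ Finset.range N₂, vzeta m i ^ (vdigit m k i * x i) := by
    refine Finset.prod_subset (Finset.range_subset_range.2 hN) fun i _ hi => ?_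
    rw [vdigit_eq_zero_of_lt (hk.trans_le (vM_mono hm (by simpa using hi))), zero_mul, pow_zero]
  rw [vpsi_eq_prod_range_succ]
  rcases le_total (k + 1) n with h | h
  · exact extend h ((lt_vM_self hm k).trans_le (vM_mono hm k.le_succ))
  · exact (extend h hk).symm

lemma vpsi_eq_one (hm : ∀ k, 2 ≤ m k) {k n : ℕ} (hk : k < vM m n) {t : VG m}
    (ht : t ∈ vI m n) : vpsi m k t = 1 := by
  rw [vpsi_eq_prod hm hk]
  exact Finset.prod_eq_one fun i hi => by rw [ht i (Finset.mem_range.1 hi), mul_zero, pow_zero]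

lemma norm_vpsi (k : ℕ) (x : VG m) : ‖vpsi m k x‖ = 1 := by
  simp [vpsi_eq_prod_range_succ, vzeta, Complex.norm_exp]

lemma prod_ite_vM (n : ℕ) (p : ℕ → Prop) [DecidablePred p] :
    ∏ i ∈ Finset.range n, (if p i then (m i : ℂ) else 0)
      = if ∀ i < n, p i then (vM m n : ℂ) else 0 := by
  simp [Finset.prod_ite_zero, vM_eq_prod]

lemma sum_vpsi_mul_conj (hm : ∀ k, 2 ≤ m k) (n : ℕ) (x t : VG m) :
    ∑ k ∈ Finset.range (vM m n), vpsi m k x * starRingEnd ℂ (vpsi m k t)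
      = if t ∈ vCyl m n x then (vM m n : ℂ) else 0 := by
  have hterm : ∀ k ∈ Finset.range (vM m n), vpsi m k x * starRingEnd ℂ (vpsi m k t)
      = ∏ i ∈ Finset.range n,
          vzeta m i ^ (vdigit m k i * x i) * starRingEnd ℂ (vzeta m i ^ (vdigit m k i * t i)) :=
    fun k hk => by
      rw [vpsi_eq_prod hm (Finset.mem_range.1 hk), vpsi_eq_prod hm (Finset.mem_range.1 hk),
        map_prod, ← Finset.prod_mul_distrib]
  rw [Finset.sum_congr rfl hterm, sum_prod_vdigit hm n fun i d =>
    vzeta m i ^ (d * x i) * starRingEnd ℂ (vzeta m i ^ (d * t i))]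
  rw [Finset.prod_congr rfl fun i _ => (isPrimitiveRoot_vzeta hm i).sum_pow_mul_conj_pow
    (x i).isLt (t i).isLt, prod_ite_vM]
  simp [vCyl, Fin.val_inj, eq_comm]

lemma vD_vM (hm : ∀ k, 2 ≤ m k) (n : ℕ) (x : VG m) :
    vD m (vM m n) x = if x ∈ vI m n then (vM m n : ℂ) else 0 := by
  have hterm : ∀ k ∈ Finset.range (vM m n), vpsi m k x
      = ∏ i ∈ Finset.range n,
          vzeta m i ^ (vdigit m k i * x i) * starRingEnd ℂ (vzeta m i ^ (vdigit m k i * 0)) :=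
    -- the trivial factor `conj (ζ ^ 0)` lets the character sum below apply with `b = 0`
    fun k hk => by simp [vpsi_eq_prod hm (Finset.mem_range.1 hk)]
  rw [vD, Finset.sum_congr rfl hterm, sum_prod_vdigit hm n fun i d =>
    vzeta m i ^ (d * x i) * starRingEnd ℂ (vzeta m i ^ (d * 0))]
  rw [Finset.prod_congr rfl fun i _ => (isPrimitiveRoot_vzeta hm i).sum_pow_mul_conj_pow
    (x i).isLt (two_pos.trans_le (hm i)), prod_ite_vM]
  exact if_congr Iff.rfl rfl rfl

lemma measurable_vpsi (k : ℕ) : Measurable (vpsi m k) := by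
  unfold vpsi
  fun_prop

lemma measurableSet_vCyl (n : ℕ) (x : VG m) : MeasurableSet (vCyl m n x) := by
  simp only [vCyl, Set.ofPred_forall]
  exact .iInter fun i => .iInter fun _ =>
    measurableSet_eq_fun (measurable_pi_apply i) measurable_const

lemma vI_eq_vCyl (hm : ∀ k, 2 ≤ m k) (n : ℕ) :
    vI m n = vCyl m n fun k => ⟨0, two_pos.trans_le (hm k)⟩ := by
  ext y
  simp [vI, vCyl, Fin.ext_iff]

lemma vI_subset_vCyl {N n : ℕ} (hNn : N ≤ n) {x : VG m} (hx : x ∈ vI m N) : vI m n ⊆ vCyl m N x :=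
  fun _ hy i hi => Fin.ext ((hy i (hi.trans_le hNn)).trans (hx i hi).symm)

variable {μ : Measure (VG m)}

lemma integrable_vpsi [IsFiniteMeasure μ] (k : ℕ) : Integrable (vpsi m k) μ :=
  .of_bound (measurable_vpsi k).aestronglyMeasurable 1 (.of_forall fun x => (norm_vpsi k x).le)

lemma integrable_vSigma [IsFiniteMeasure μ] (f : VG m → ℂ) (n : ℕ) :
    Integrable (vSigma μ f n) μ := by
  unfold vSigma vS
  exact (integrable_finsetSum _ fun k _ => integrable_finsetSum _ fun j _ =>
    (integrable_vpsi j).const_mul _).const_mul _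

/-- Under `μ`, the first `n` coordinates are uniformly distributed over the `vM m n` digit
tuples, since their fibres are the cylinders of level `n`. -/
lemma integral_prod_coord (hm : ∀ k, 2 ≤ m k) [IsFiniteMeasure μ] (hμ : isVHaar μ) (n : ℕ)
    (F : ℕ → ℕ → ℂ) :
    ∫ t, ∏ i ∈ Finset.range n, F i (t i) ∂μ
      = (vM m n : ℂ)⁻¹ * ∏ i ∈ Finset.range n, ∑ a ∈ Finset.range (m i), F i a := by
  set π : VG m → ((i : Fin n) → Fin (m i)) := fun t i => t i
  have hπ : Measurable π := by fun_prop
  have hfibre (v : (i : Fin n) → Fin (m i)) : (μ.map π).real {v} = (vM m n : ℝ)⁻¹ := by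
    let x : VG m := fun k => if h : k < n then v ⟨k, h⟩ else ⟨0, two_pos.trans_le (hm k)⟩
    have : π ⁻¹' {v} = vCyl m n x := by
      ext t
      simp only [Set.mem_preimage, Set.mem_singleton_iff, funext_iff, vCyl, Set.mem_ofPred_eq, π]
      exact ⟨fun h i hi => by simp [x, hi, h ⟨i, hi⟩], fun h i => by simp [x, h i i.isLt]⟩
    rw [measureReal_def, Measure.map_apply hπ (measurableSet_singleton v), this, hμ]
    simp [ENNReal.toReal_inv]
  have hprod (t : VG m) : ∏ i ∈ Finset.range n, F i (t i) = ∏ i : Fin n, F i (π t i) :=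
    (Fin.prod_univ_eq_prod_range (fun i => F i (t i)) n).symm
  simp_rw [hprod]
  rw [← integral_map (f := fun v => ∏ i : Fin n, F i (v i)) hπ.aemeasurable
    (measurable_of_finite _).aestronglyMeasurable, integral_fintype .of_finite]
  simp_rw [hfibre, Complex.real_smul, ← Finset.mul_sum, Complex.ofReal_inv, Complex.ofReal_natCast]
  rw [← Fin.prod_univ_eq_prod_range (fun i => ∑ a ∈ Finset.range (m i), F i a)]
  simp_rw [← Fin.sum_univ_eq_sum_range, Finset.prod_univ_sum, Fintype.piFinset_univ]

lemma integral_vpsi_mul_conj (hm : ∀ k, 2 ≤ m k) [IsFiniteMeasure μ] (hμ : isVHaar μ)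
    (a j : ℕ) : ∫ t, vpsi m a t * starRingEnd ℂ (vpsi m j t) ∂μ = if a = j then 1 else 0 := by
  set n := max a j + 1
  have ha : a < vM m n := (Nat.lt_succ_of_le (le_max_left a j)).trans (lt_vM_self hm n)
  have hj : j < vM m n := (Nat.lt_succ_of_le (le_max_right a j)).trans (lt_vM_self hm n)
  have hterm (t : VG m) : vpsi m a t * starRingEnd ℂ (vpsi m j t)
      = ∏ i ∈ Finset.range n,
          vzeta m i ^ (t i * vdigit m a i) * starRingEnd ℂ (vzeta m i ^ (t i * vdigit m j i)) := by
    rw [vpsi_eq_prod hm ha, vpsi_eq_prod hm hj, map_prod, ← Finset.prod_mul_distrib]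
    simp_rw [mul_comm (vdigit m _ _)]
  simp_rw [hterm]
  rw [integral_prod_coord hm hμ n fun i b =>
    vzeta m i ^ (b * vdigit m a i) * starRingEnd ℂ (vzeta m i ^ (b * vdigit m j i))]
  rw [Finset.prod_congr rfl fun i _ => (isPrimitiveRoot_vzeta hm i).sum_pow_mul_conj_pow
    (vdigit_lt hm a i) (vdigit_lt hm j i), prod_ite_vM]
  have hdigits : (∀ i < n, vdigit m a i = vdigit m j i) ↔ a = j :=
    ⟨eq_of_vdigit_eq ha hj, fun h _ _ => h ▸ rfl⟩
  simp only [hdigits]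
  split_ifs
  · exact inv_mul_cancel₀ (Nat.cast_ne_zero.2 (vM_pos hm n).ne')
  · exact mul_zero _

lemma vS_vM_eq_setIntegral (hm : ∀ k, 2 ≤ m k) {g : VG m → ℂ} (hg : Integrable g μ) (n : ℕ)
    (x : VG m) : vS μ g (vM m n) x = vM m n * ∫ t in vCyl m n x, g t ∂μ := by
  have hint (k : ℕ) : Integrable (fun t => g t * (starRingEnd ℂ (vpsi m k t) * vpsi m k x)) μ :=
    hg.mul_bdd ((Complex.continuous_conj.measurable.comp (measurable_vpsi k)).mul_const
      _).aestronglyMeasurable (c := 1) (.of_forall fun t => by simp [norm_vpsi])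
  simp_rw [vS, vCoeff, ← integral_mul_const, mul_assoc]
  rw [← integral_finsetSum _ fun k _ => hint k]
  simp_rw [← Finset.mul_sum, mul_comm (starRingEnd ℂ _), sum_vpsi_mul_conj hm, mul_ite, mul_zero]
  rw [← integral_const_mul, ← integral_indicator (measurableSet_vCyl n x)]
  congr 1 with t
  simp only [Set.indicator_apply, mul_comm (g t)]

lemma vS_of_mem_vI (hm : ∀ k, 2 ≤ m k) (f : VG m → ℂ) {n k : ℕ} (hk : k ≤ vM m n) {t : VG m}
    (ht : t ∈ vI m n) : vS μ f k t = ∑ j ∈ Finset.range k, vCoeff μ f j :=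
  Finset.sum_congr rfl fun j hj => by
    rw [vpsi_eq_one hm ((Finset.mem_range.1 hj).trans_le hk) ht, mul_one]

def vfA (m : ℕ → ℕ) (A : ℕ) (y : VG m) : ℂ := vD m (vM m (A + 1)) y - vD m (vM m A) y

lemma vCoeff_vfA (hm : ∀ k, 2 ≤ m k) [IsFiniteMeasure μ] (hμ : isVHaar μ) (A j : ℕ) :
    vCoeff μ (vfA m A) j = if j ∈ Finset.Ico (vM m A) (vM m (A + 1)) then 1 else 0 := by
  have hfA : vfA m A = fun y => ∑ k ∈ Finset.Ico (vM m A) (vM m (A + 1)), vpsi m k y := by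
    ext y
    rw [vfA, vD, vD, Finset.sum_Ico_eq_sub _ (vM_mono hm A.le_succ)]
  have hint (k : ℕ) : Integrable (fun t => vpsi m k t * starRingEnd ℂ (vpsi m j t)) μ :=
    (integrable_vpsi k).mul_bdd
      (Complex.continuous_conj.measurable.comp (measurable_vpsi j)).aestronglyMeasurable (c := 1)
      (.of_forall fun t => by simp [norm_vpsi])
  simp_rw [vCoeff, hfA, Finset.sum_mul]
  rw [integral_finsetSum _ fun k _ => hint k]
  simp_rw [integral_vpsi_mul_conj hm hμ, Finset.sum_ite_eq']

lemma vS_vfA_of_mem_vI (hm : ∀ k, 2 ≤ m k) [IsFiniteMeasure μ] (hμ : isVHaar μ) (A : ℕ)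
    {k : ℕ} (hk : k ≤ vM m (A + 1)) {t : VG m} (ht : t ∈ vI m (A + 1)) :
    vS μ (vfA m A) k t = (k - vM m A : ℕ) := by
  simp_rw [vS_of_mem_vI hm _ hk ht, vCoeff_vfA hm hμ, Finset.sum_boole, Finset.mem_Ico]
  have hfilter : {j ∈ Finset.range k | vM m A ≤ j ∧ j < vM m (A + 1)} = Finset.Ico (vM m A) k := by
    ext j
    simp only [Finset.mem_filter, Finset.mem_range, Finset.mem_Ico]
    omega
  rw [hfilter, Nat.card_Ico]

lemma two_mul_sum_Icc_tsub (a b : ℕ) :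
    2 * ∑ k ∈ Finset.Icc 1 b, (k - a) = (b - a) * (b - a + 1) := by
  induction b with
  | zero => simp
  | succ b ih =>
    rw [Finset.sum_Icc_succ_top (by omega), mul_add, ih]
    rcases le_or_gt a b with hab | hab
    · obtain ⟨c, rfl⟩ := Nat.exists_eq_add_of_le hab
      rw [show a + c + 1 - a = c + 1 by omega, Nat.add_sub_cancel_left]
      ring
    · rw [show b - a = 0 by omega, show b + 1 - a = 0 by omega]

lemma mul_le_four_mul_sum_Icc_tsub {a b : ℕ} (h : 2 * a ≤ b) :
    a * b ≤ 4 * ∑ k ∈ Finset.Icc 1 b, (k - a) := by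
  have hsum := two_mul_sum_Icc_tsub a b
  have ha : a ≤ b - a := by omega
  have hb : b ≤ 2 * (b - a) := by omega
  nlinarith [Nat.mul_le_mul ha hb]

lemma le_norm_vSigma_vfA (hm : ∀ k, 2 ≤ m k) [IsFiniteMeasure μ] (hμ : isVHaar μ) (A : ℕ)
    {t : VG m} (ht : t ∈ vI m (A + 1)) :
    (vM m A : ℝ) / 4 ≤ ‖vSigma μ (vfA m A) (vM m (A + 1)) t‖ := by
  have hpos : (0 : ℝ) < vM m (A + 1) := by exact_mod_cast vM_pos hm (A + 1)
  have hsum : ((vM m A * vM m (A + 1) : ℕ) : ℝ)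
      ≤ 4 * ((∑ k ∈ Finset.Icc 1 (vM m (A + 1)), (k - vM m A) : ℕ) : ℝ) := by
    exact_mod_cast mul_le_four_mul_sum_Icc_tsub (Nat.mul_le_mul_right _ (hm A))
  rw [vSigma, Finset.sum_congr rfl fun k hk =>
    vS_vfA_of_mem_vI hm hμ A (Finset.mem_Icc.1 hk).2 ht, ← Nat.cast_sum, norm_mul, norm_inv,
    Complex.norm_natCast, Complex.norm_natCast, inv_mul_eq_div, div_le_iff₀ four_pos,
    div_mul_eq_mul_div, le_div_iff₀ hpos]
  rw [Nat.cast_mul] at hsum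
  linarith

lemma le_setIntegral_vI_norm_vSigma_vfA (hm : ∀ k, 2 ≤ m k) [IsFiniteMeasure μ]
    (hμ : isVHaar μ) (A : ℕ) :
    (vM m A : ℝ) / (4 * vM m (A + 1))
      ≤ ∫ t in vI m (A + 1), ‖vSigma μ (vfA m A) (vM m (A + 1)) t‖ ∂μ := by
  have hvI : μ.real (vI m (A + 1)) = (vM m (A + 1) : ℝ)⁻¹ := by
    rw [measureReal_def, vI_eq_vCyl hm, hμ, ENNReal.toReal_inv, ENNReal.toReal_natCast]
  have := setIntegral_ge_of_const_le (vI_eq_vCyl hm (A + 1) ▸ measurableSet_vCyl _ _)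
    (measure_ne_top μ _) (fun t ht => le_norm_vSigma_vfA hm hμ A ht)
    (integrable_vSigma (vfA m A) (vM m (A + 1))).norm.integrableOn
  rwa [hvI, smul_eq_mul, inv_mul_eq_div, div_div] at this

lemma re_vS_vM_sigAbsFA (hm : ∀ k, 2 ≤ m k) [IsFiniteMeasure μ] (A n : ℕ) (x : VG m) :
    (vS μ (sigAbsFA μ A) (vM m n) x).re
      = vM m n * ∫ t in vCyl m n x, ‖vSigma μ (vfA m A) (vM m (A + 1)) t‖ ∂μ := by
  set σ : VG m → ℝ := fun t => ‖vSigma μ (vfA m A) (vM m (A + 1)) t‖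
  rw [show sigAbsFA μ A = fun t => (σ t : ℂ) from rfl,
    vS_vM_eq_setIntegral hm (g := fun t => (σ t : ℂ)) (integrable_vSigma _ _).norm.ofReal,
    integral_complex_ofReal]
  simp

end Vilenkin

open Vilenkin in
/-- `S_{M_N}(|σ_{M_{A+1}} f_A|)(x) ≥ c D_{M_N}(x)` for `N ≤ A`. -/
theorem SMN_of_abs_sigma_lower (m : ℕ → ℕ) (hm : ∀ k, 2 ≤ m k) (hb : ∃ B, ∀ k, m k ≤ B)
    (μ : Measure (VG m)) [IsProbabilityMeasure μ] (hμ : isVHaar μ) :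
    ∃ c : ℝ, 0 < c ∧ ∀ A N : ℕ, N ≤ A → ∀ x : VG m,
      c * (vD m (vM m N) x).re ≤ (vS μ (sigAbsFA μ A) (vM m N) x).re := by
  obtain ⟨B, hB⟩ := hb
  have hB0 : (0 : ℝ) < B := by exact_mod_cast two_pos.trans_le ((hm 0).trans (hB 0))
  refine ⟨(4 * B)⁻¹, by positivity, fun A N hNA x => ?_⟩
  set σ : VG m → ℝ := fun t => ‖vSigma μ (vfA m A) (vM m (A + 1)) t‖
  have hMA : (0 : ℝ) < vM m A := by exact_mod_cast vM_pos hm A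
  have hMA1_pos : (0 : ℝ) < vM m (A + 1) := by exact_mod_cast vM_pos hm (A + 1)
  have hMA1_le : (vM m (A + 1) : ℝ) ≤ B * vM m A := by exact_mod_cast Nat.mul_le_mul_right _ (hB A)
  rw [re_vS_vM_sigAbsFA hm, vD_vM hm]
  split_ifs with hx
  · have hc : (4 * B : ℝ)⁻¹ ≤ (vM m A : ℝ) / (4 * vM m (A + 1)) := by
      rw [inv_eq_one_div, div_le_div_iff₀ (by positivity) (by positivity)]
      linarith
    calc (4 * B : ℝ)⁻¹ * ((vM m N : ℂ)).re
        ≤ vM m N * ((vM m A : ℝ) / (4 * vM m (A + 1))) := by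
          rw [Complex.natCast_re, mul_comm]; gcongr
      _ ≤ vM m N * ∫ t in vI m (A + 1), σ t ∂μ :=
          mul_le_mul_of_nonneg_left (le_setIntegral_vI_norm_vSigma_vfA hm hμ A) (Nat.cast_nonneg _)
      _ ≤ vM m N * ∫ t in vCyl m N x, σ t ∂μ :=
          mul_le_mul_of_nonneg_left (setIntegral_mono_set (integrable_vSigma _ _).norm.integrableOn
            (.of_forall fun t => norm_nonneg _) (vI_subset_vCyl (by omega) hx).eventuallyLE)
            (Nat.cast_nonneg _)
  · simpa using mul_nonneg (Nat.cast_nonneg _) (setIntegral_nonneg (measurableSet_vCyl N x)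
      fun t _ => norm_nonneg _)

end
end

section
/- For 0 < p < 1, the ratio \| \sup_{N} S_{M_N}(|\sigma_{M_{A+1}} f_A|) \|_p / \|f_A\|_{H_p} \geq c_p M_A^{1/p - 1} \to \infty as A \to \infty, where f_A = D_{M_{A+1}} - D_{M_A}. Consequently the operator f \mapsto |\sigma_{M_n} f| is not bounded from H_p(G_m) to H_p(G_m) for 0 < p < 1. -/
open MeasureTheory Complex Filter
open scoped Classical
open scoped ENNReal NNReal

noncomputable section

variable {m : ℕ → ℕ}

/-!
The block `f_A = D_{M_{A+1}} - D_{M_A}` is `∑_{M_A ≤ j < M_{A+1}} ψ_j`, so by orthonormality of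
the Vilenkin characters each partial sum `S_{M_k} f_A` is `f_A` or `0`, and Paley's lemma
`D_{M_n} = M_n 1_{I_n}` gives `|f_A| ≤ M_{A+1} 1_{I_A}`; hence `‖f_A‖_{H_p} ≤ m_A M_A^{1-1/p}`.
On the other side `S_1 g` is the constant `ĝ(0)`, so the `H_p` norm of `|σ_{M_{A+1}} f_A|` is at
least `∫ |σ_{M_{A+1}} f_A|`, which dominates the Fourier coefficient of `σ_{M_{A+1}} f_A` at `M_A`,
namely `(M_{A+1} - M_A) / M_{A+1} ≥ 1/2`. Since `M_A^{1-1/p} → 0` for `p < 1`, no constant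
bounds `f ↦ |σ_{M_n} f|` on `H_p`.

Orthonormality is reduced to finite sums: a function of the first `n` coordinates integrates to
its mean over the `M_n` cylinders, which are indexed by the integers below `M_n` through their
mixed-radix digits, and the character sums then factor into sums of `m_k`-th roots of unity.
-/

open Finset ComplexConjugate

theorem vM_succ (n : ℕ) : vM m (n + 1) = m n * vM m n := rfl

theorem vM_eq_prod (n : ℕ) : vM m n = ∏ k ∈ range n, m k := by
  induction n with
  | zero => rfl
  | succ n ih => rw [vM_succ, prod_range_succ, ih, mul_comm]

theorem vM_pos (hm : ∀ k, 0 < m k) (n : ℕ) : 0 < vM m n := by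
  rw [vM_eq_prod]
  exact prod_pos fun k _ => hm k

theorem vM_dvd_vM {k n : ℕ} (h : k ≤ n) : vM m k ∣ vM m n := by
  rw [vM_eq_prod, vM_eq_prod]
  exact prod_dvd_prod_of_subset _ _ _ (range_subset_range.2 h)

theorem vM_mono (hm : ∀ k, 0 < m k) {k n : ℕ} (h : k ≤ n) : vM m k ≤ vM m n :=
  Nat.le_of_dvd (vM_pos hm n) (vM_dvd_vM h)

theorem lt_vM (hm : ∀ k, 2 ≤ m k) (n : ℕ) : n < vM m n := by
  refine n.lt_two_pow_self.trans_le ?_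
  simpa [vM_eq_prod] using pow_card_le_prod (range n) m 2 fun k _ => hm k

theorem vdigit_lt (hm : ∀ k, 0 < m k) (t k : ℕ) : vdigit m t k < m k :=
  Nat.mod_lt _ (hm k)

theorem vdigit_eq_zero {t k : ℕ} (h : t < vM m k) : vdigit m t k = 0 := by
  rw [vdigit, Nat.div_eq_of_lt h, Nat.zero_mod]

theorem vdigit_mul_vM_add_of_lt (hm : ∀ k, 0 < m k) {k n : ℕ} (hk : k < n) (a r : ℕ) :
    vdigit m (a * vM m n + r) k = vdigit m r k := by
  obtain ⟨c, hc⟩ := vM_dvd_vM (m := m) hk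
  have hsplit : a * vM m n + r = r + vM m k * (m k * (a * c)) := by rw [hc, vM_succ]; ring
  rw [vdigit, vdigit, hsplit, Nat.add_mul_div_left _ _ (vM_pos hm k), Nat.add_mul_mod_self_left]

theorem vdigit_mul_vM_add_self {n a r : ℕ} (hr : r < vM m n) (ha : a < m n) :
    vdigit m (a * vM m n + r) n = a := by
  rw [vdigit, add_comm, mul_comm, Nat.add_mul_div_left _ _ (Nat.zero_lt_of_lt hr),
    Nat.div_eq_of_lt hr, zero_add, Nat.mod_eq_of_lt ha]

theorem sum_vdigit_mul_vM (hm : ∀ k, 0 < m k) {n t : ℕ} (h : t < vM m n) :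
    ∑ i ∈ range n, vdigit m t i * vM m i = t := by
  induction n generalizing t with
  | zero => simp_all [vM]
  | succ n ih =>
    obtain ⟨a, r, hr, rfl⟩ : ∃ a r, r < vM m n ∧ t = a * vM m n + r :=
      ⟨t / vM m n, t % vM m n, Nat.mod_lt _ (vM_pos hm n), by rw [mul_comm, Nat.div_add_mod]⟩
    have ha : a < m n := by
      rw [vM_succ] at h
      nlinarith
    rw [sum_range_succ, vdigit_mul_vM_add_self hr ha,
      sum_congr rfl fun i hi => by rw [vdigit_mul_vM_add_of_lt hm (mem_range.1 hi)], ih hr]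
    ring

theorem sum_range_mul_eq_sum_sum {M : Type*} [AddCommMonoid M] (f : ℕ → M) (a b : ℕ) :
    ∑ t ∈ range (a * b), f t = ∑ i ∈ range a, ∑ j ∈ range b, f (i * b + j) := by
  induction a with
  | zero => simp
  | succ a ih => rw [Nat.succ_mul, sum_range_add, ih, sum_range_succ]

theorem sum_range_vM_prod_vdigit {R : Type*} [CommSemiring R] (hm : ∀ k, 0 < m k) (n : ℕ)
    (F : ℕ → ℕ → R) :
    ∑ t ∈ range (vM m n), ∏ k ∈ range n, F k (vdigit m t k) =
      ∏ k ∈ range n, ∑ a ∈ range (m k), F k a := by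
  induction n with
  | zero => simp [vM]
  | succ n ih =>
    have hsplit : ∀ a ∈ range (m n), ∀ r ∈ range (vM m n),
        ∏ k ∈ range (n + 1), F k (vdigit m (a * vM m n + r) k) =
          (∏ k ∈ range n, F k (vdigit m r k)) * F n a := by
      intro a ha r hr
      rw [prod_range_succ, vdigit_mul_vM_add_self (mem_range.1 hr) (mem_range.1 ha)]
      congr 1
      exact prod_congr rfl fun k hk => by rw [vdigit_mul_vM_add_of_lt hm (mem_range.1 hk)]
    rw [vM_succ, sum_range_mul_eq_sum_sum, prod_range_succ, ← ih, sum_mul_sum, sum_comm]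
    exact sum_congr rfl fun r hr => sum_congr rfl fun a ha => hsplit a ha r hr

def vOfNat (hm : ∀ k, 0 < m k) (t : ℕ) : VG m := fun k => ⟨vdigit m t k, vdigit_lt hm t k⟩

def vToNat (n : ℕ) (x : VG m) : ℕ := ∑ k ∈ range n, (x k : ℕ) * vM m k

theorem vToNat_lt (n : ℕ) (x : VG m) : vToNat n x < vM m n := by
  induction n with
  | zero => simp [vToNat, vM]
  | succ n ih =>
    rw [vToNat, sum_range_succ, vM_succ]
    calc vToNat n x + (x n : ℕ) * vM m n < ((x n : ℕ) + 1) * vM m n := by rw [add_one_mul]; omega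
      _ ≤ m n * vM m n := Nat.mul_le_mul_right _ (x n).isLt

theorem vdigit_vToNat (x : VG m) {i n : ℕ} (hi : i < n) : vdigit m (vToNat n x) i = x i := by
  induction n with
  | zero => omega
  | succ n ih =>
    rw [vToNat, sum_range_succ, add_comm, ← vToNat]
    rcases (Nat.lt_succ_iff_lt_or_eq.1 hi) with hi | rfl
    · rw [vdigit_mul_vM_add_of_lt (fun k => (x k).pos) hi, ih hi]
    · exact vdigit_mul_vM_add_self (vToNat_lt i x) (x i).isLt

theorem mem_vCyl_vOfNat_iff (hm : ∀ k, 0 < m k) {n t : ℕ} (ht : t < vM m n) (x : VG m) :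
    x ∈ vCyl m n (vOfNat hm t) ↔ vToNat n x = t := by
  constructor
  · intro hx
    conv_rhs => rw [← sum_vdigit_mul_vM hm ht]
    exact sum_congr rfl fun i hi => by rw [hx i (mem_range.1 hi)]; rfl
  · rintro rfl i hi
    exact Fin.ext (vdigit_vToNat x hi).symm

theorem measurableSet_vCyl (n : ℕ) (x : VG m) : MeasurableSet (vCyl m n x) := by
  simp only [vCyl, Set.ofPred_forall]
  exact .iInter fun i => .iInter fun _ =>
    (measurableSet_singleton (x i)).preimage (measurable_pi_apply i)

theorem integral_eq_sum_vOfNat {E : Type*} [NormedAddCommGroup E] [NormedSpace ℝ E]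
    [CompleteSpace E] (hm : ∀ k, 0 < m k) {μ : Measure (VG m)} [IsFiniteMeasure μ]
    (hμ : isVHaar μ) {n : ℕ} {f : VG m → E} (hf : ∀ x y : VG m, (∀ i < n, x i = y i) → f x = f y) :
    ∫ x, f x ∂μ = (vM m n : ℝ)⁻¹ • ∑ t ∈ range (vM m n), f (vOfNat hm t) := by
  have hdecomp : ∀ x, f x = ∑ t ∈ range (vM m n),
      (vCyl m n (vOfNat hm t)).indicator (fun _ => f (vOfNat hm t)) x := by
    intro x
    rw [sum_eq_single_of_mem (vToNat n x) (mem_range.2 (vToNat_lt n x)),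
      Set.indicator_of_mem ((mem_vCyl_vOfNat_iff hm (vToNat_lt n x) x).2 rfl)]
    · exact hf _ _ fun i hi => Fin.ext (vdigit_vToNat x hi).symm
    · intro t ht hne
      exact Set.indicator_of_notMem
        (fun hx => hne ((mem_vCyl_vOfNat_iff hm (mem_range.1 ht) x).1 hx).symm) _
  rw [integral_congr_ae (Eventually.of_forall hdecomp), integral_finsetSum _ fun t _ =>
    (integrable_const _).indicator (measurableSet_vCyl n _), smul_sum]
  refine sum_congr rfl fun t _ => ?_
  rw [integral_indicator_const _ (measurableSet_vCyl n _), measureReal_def, hμ, ENNReal.toReal_inv,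
    ENNReal.toReal_natCast]

theorem sum_range_exp_mul_div (M : ℕ) (hM : 0 < M) (c : ℤ) :
    ∑ a ∈ range M, exp (2 * Real.pi * I * c * a / M) = if (M : ℤ) ∣ c then (M : ℂ) else 0 := by
  set ζ := exp (2 * Real.pi * I / M)
  have hζ : IsPrimitiveRoot ζ M := Complex.isPrimitiveRoot_exp M hM.ne'
  have hterm : ∀ a : ℕ, exp (2 * Real.pi * I * c * a / M) = (ζ ^ c) ^ a := by
    intro a
    rw [← zpow_natCast, ← zpow_mul, ← Complex.exp_int_mul]
    push_cast
    ring_nf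
  rw [sum_congr rfl fun a _ => hterm a]
  split_ifs with h
  · simp [(hζ.zpow_eq_one_iff_dvd c).2 h]
  · rw [geom_sum_eq ((hζ.zpow_eq_one_iff_dvd c).not.2 h), ← zpow_natCast, ← zpow_mul, mul_comm,
      zpow_mul, zpow_natCast, hζ.pow_eq_one, one_zpow, sub_self, zero_div]

-- `vpsi m j x` is by definition `∏ k ∈ range (j + 1), vExp (m k) (vdigit m j k) (x k)`.
def vExp (M d a : ℕ) : ℂ := exp (2 * Real.pi * I * d * a / M)

theorem vExp_comm (M d a : ℕ) : vExp M d a = vExp M a d := by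
  simp only [vExp]
  ring_nf

theorem vExp_zero_left (M a : ℕ) : vExp M 0 a = 1 := by
  simp [vExp]

theorem norm_vExp (M d a : ℕ) : ‖vExp M d a‖ = 1 := by
  simp [vExp, Complex.norm_exp, Complex.div_re]

theorem sum_range_vExp_mul_conj {M d e : ℕ} (hd : d < M) (he : e < M) :
    ∑ a ∈ range M, vExp M d a * conj (vExp M e a) = if d = e then (M : ℂ) else 0 := by
  have hterm : ∀ a : ℕ, vExp M d a * conj (vExp M e a) =
      exp (2 * Real.pi * I * ((d - e : ℤ) : ℂ) * a / M) := by
    intro a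
    rw [vExp, vExp, ← Complex.exp_conj, ← Complex.exp_add]
    congr 1
    simp only [map_div₀, map_mul, Complex.conj_I, Complex.conj_ofReal, map_natCast, map_ofNat]
    push_cast
    ring
  rw [sum_congr rfl fun a _ => hterm a, sum_range_exp_mul_div M (by omega)]
  congr 1
  refine propext ⟨fun h => ?_, fun h => by simp [h]⟩
  have := Int.eq_zero_of_abs_lt_dvd h (by rw [abs_lt]; omega)
  omega

theorem sum_range_vExp {M a : ℕ} (ha : a < M) :
    ∑ d ∈ range M, vExp M d a = if a = 0 then (M : ℂ) else 0 := by
  have hM : 0 < M := by omega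
  simpa [vExp_comm M _ a, vExp_zero_left] using sum_range_vExp_mul_conj ha hM

theorem vpsi_eq_prod (hm : ∀ k, 2 ≤ m k) {j n : ℕ} (hj : j < vM m n) (x : VG m) :
    vpsi m j x = ∏ k ∈ range n, vExp (m k) (vdigit m j k) (x k) := by
  have hm₀ : ∀ k, 0 < m k := fun k => Nat.zero_lt_of_lt (hm k)
  have hextend : ∀ {n₁ n₂ : ℕ}, j < vM m n₁ → n₁ ≤ n₂ →
      ∏ k ∈ range n₁, vExp (m k) (vdigit m j k) (x k) =
        ∏ k ∈ range n₂, vExp (m k) (vdigit m j k) (x k) := fun hj₁ h =>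
    prod_subset (range_subset_range.2 h) fun k _ hk => by
      rw [vdigit_eq_zero (hj₁.trans_le (vM_mono hm₀ (not_lt.1 (mt mem_range.2 hk)))),
        vExp_zero_left]
  rcases le_total (j + 1) n with h | h
  · exact hextend (lt_vM hm (j + 1) |>.trans' j.lt_succ_self) h
  · exact (hextend hj h).symm

theorem vpsi_zero (x : VG m) : vpsi m 0 x = 1 := by
  simp [vpsi, vdigit]

theorem norm_vpsi (j : ℕ) (x : VG m) : ‖vpsi m j x‖ = 1 := by
  change ‖∏ k ∈ range (j + 1), vExp (m k) (vdigit m j k) (x k)‖ = 1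
  rw [norm_prod]
  exact prod_eq_one fun k _ => norm_vExp _ _ _

theorem measurable_vpsi (j : ℕ) : Measurable (vpsi m j) :=
  Finset.measurable_prod (f := fun k (x : VG m) => vExp (m k) (vdigit m j k) (x k)) _
    fun k _ => (measurable_of_countable fun a : Fin (m k) => vExp (m k) (vdigit m j k) a).comp
      (measurable_pi_apply k)

theorem integrable_vpsi (μ : Measure (VG m)) [IsFiniteMeasure μ] (j : ℕ) :
    Integrable (vpsi m j) μ :=
  .of_bound (measurable_vpsi j).aestronglyMeasurable 1 (.of_forall fun x => (norm_vpsi j x).le)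

theorem integrable_vpsi_mul_conj (μ : Measure (VG m)) [IsFiniteMeasure μ] (i j : ℕ) :
    Integrable (fun x => vpsi m i x * conj (vpsi m j x)) μ :=
  .of_bound ((measurable_vpsi i).mul
    (Complex.continuous_conj.measurable.comp (measurable_vpsi j))).aestronglyMeasurable 1
    (.of_forall fun x => by simp [norm_vpsi])

theorem eq_of_vdigit_eq (hm : ∀ k, 0 < m k) {i j n : ℕ} (hi : i < vM m n) (hj : j < vM m n)
    (h : ∀ k ∈ range n, vdigit m i k = vdigit m j k) : i = j := by
  rw [← sum_vdigit_mul_vM hm hi, ← sum_vdigit_mul_vM hm hj]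
  exact sum_congr rfl fun k hk => by rw [h k hk]

theorem integral_vpsi_mul_conj (hm : ∀ k, 2 ≤ m k) {μ : Measure (VG m)} [IsFiniteMeasure μ]
    (hμ : isVHaar μ) (i j : ℕ) :
    ∫ x, vpsi m i x * conj (vpsi m j x) ∂μ = if i = j then 1 else 0 := by
  have hm₀ : ∀ k, 0 < m k := fun k => Nat.zero_lt_of_lt (hm k)
  set n := i + j + 1
  have hi : i < vM m n := (lt_vM hm i).trans_le (vM_mono hm₀ (by omega))
  have hj : j < vM m n := (lt_vM hm j).trans_le (vM_mono hm₀ (by omega))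
  have hprod : ∀ x, vpsi m i x * conj (vpsi m j x) =
      ∏ k ∈ range n, vExp (m k) (vdigit m i k) (x k) * conj (vExp (m k) (vdigit m j k) (x k)) := by
    intro x
    rw [vpsi_eq_prod hm hi, vpsi_eq_prod hm hj, map_prod, prod_mul_distrib]
  have hdigits : (∀ k ∈ range n, vdigit m i k = vdigit m j k) ↔ i = j :=
    ⟨eq_of_vdigit_eq hm₀ hi hj, fun h _ _ => h ▸ rfl⟩
  rw [integral_congr_ae (.of_forall hprod), integral_eq_sum_vOfNat hm₀ hμ fun x y h =>
    prod_congr rfl fun k hk => by rw [h k (mem_range.1 hk)]]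
  simp only [vOfNat]
  rw [sum_range_vM_prod_vdigit hm₀ n
      fun k a => vExp (m k) (vdigit m i k) a * conj (vExp (m k) (vdigit m j k) a),
    prod_congr rfl fun k _ => sum_range_vExp_mul_conj (vdigit_lt hm₀ i k) (vdigit_lt hm₀ j k),
    prod_ite_zero, ← Nat.cast_prod, ← vM_eq_prod]
  simp only [hdigits]
  split_ifs
  · rw [Complex.real_smul, Complex.ofReal_inv, Complex.ofReal_natCast,
      inv_mul_cancel₀ (Nat.cast_ne_zero.2 (vM_pos hm₀ n).ne')]
  · exact smul_zero _

theorem vCoeff_sum_vpsi (hm : ∀ k, 2 ≤ m k) {μ : Measure (VG m)} [IsFiniteMeasure μ]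
    (hμ : isVHaar μ) (s : Finset ℕ) (c : ℕ → ℂ) (j : ℕ) :
    vCoeff μ (fun x => ∑ k ∈ s, c k * vpsi m k x) j = if j ∈ s then c j else 0 := by
  simp only [vCoeff, sum_mul, mul_assoc]
  rw [integral_finsetSum _ fun k _ => (integrable_vpsi_mul_conj μ k j).const_mul (c k)]
  simp [integral_const_mul, integral_vpsi_mul_conj hm hμ]

theorem sum_Icc_sum_range {M : Type*} [AddCommMonoid M] (g : ℕ → M) (n : ℕ) :
    ∑ l ∈ Icc 1 n, ∑ k ∈ range l, g k = ∑ k ∈ range n, (n - k) • g k := by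
  induction n with
  | zero => simp
  | succ n ih =>
    have hstep : ∀ k ∈ range n, (n - k) • g k + g k = (n + 1 - k) • g k := fun k hk => by
      rw [← succ_nsmul]
      congr 1
      have := mem_range.1 hk
      omega
    rw [sum_Icc_succ_top (by omega), ih, sum_range_succ g, sum_range_succ _ n, ← add_assoc,
      ← sum_add_distrib, sum_congr rfl hstep, Nat.add_sub_cancel_left, one_smul]

theorem vSigma_eq_sum (μ : Measure (VG m)) (f : VG m → ℂ) (n : ℕ) (x : VG m) :
    vSigma μ f n x = ∑ k ∈ range n, ((n - k : ℕ) / n * vCoeff μ f k) * vpsi m k x := by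
  rw [vSigma]
  simp only [vS]
  rw [sum_Icc_sum_range, mul_sum]
  refine sum_congr rfl fun k _ => ?_
  rw [nsmul_eq_mul]
  ring

theorem vCoeff_vSigma (hm : ∀ k, 2 ≤ m k) {μ : Measure (VG m)} [IsFiniteMeasure μ]
    (hμ : isVHaar μ) (f : VG m → ℂ) (n j : ℕ) :
    vCoeff μ (vSigma μ f n) j = (n - j : ℕ) / n * vCoeff μ f j := by
  rw [show vSigma μ f n = _ from funext (vSigma_eq_sum μ f n), vCoeff_sum_vpsi hm hμ]
  split_ifs with h
  · rfl
  · simp [Nat.sub_eq_zero_of_le (not_lt.1 (mt mem_range.2 h))]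

theorem norm_vCoeff_le_integral_norm (μ : Measure (VG m)) (f : VG m → ℂ) (j : ℕ) :
    ‖vCoeff μ f j‖ ≤ ∫ x, ‖f x‖ ∂μ :=
  (norm_integral_le_integral_norm _).trans_eq (by simp [norm_vpsi])

theorem ofReal_norm_vCoeff_zero_le_vHp {μ : Measure (VG m)} [IsProbabilityMeasure μ] {p : ℝ}
    (hp : 0 < p) (f : VG m → ℂ) : ENNReal.ofReal ‖vCoeff μ f 0‖ ≤ vHp μ p f := by
  have hS : ∀ x, vS μ f (vM m 0) x = vCoeff μ f 0 := fun x => by simp [vS, vM, vpsi_zero]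
  calc ENNReal.ofReal ‖vCoeff μ f 0‖
      = (∫⁻ _, ENNReal.ofReal ‖vCoeff μ f 0‖ ^ p ∂μ) ^ (1 / p) := by
        rw [lintegral_const, measure_univ, mul_one, ← ENNReal.rpow_mul, mul_one_div_cancel hp.ne',
          ENNReal.rpow_one]
    _ ≤ vHp μ p f := by
        unfold vHp
        gcongr with x
        rw [← hS x]
        exact le_iSup (fun k => ENNReal.ofReal ‖vS μ f (vM m k) x‖) 0

theorem ofReal_norm_vCoeff_le_vHp_norm {μ : Measure (VG m)} [IsProbabilityMeasure μ] {p : ℝ}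
    (hp : 0 < p) (g : VG m → ℂ) (j : ℕ) :
    ENNReal.ofReal ‖vCoeff μ g j‖ ≤ vHp μ p (fun x => (‖g x‖ : ℂ)) := by
  have hcoeff : vCoeff μ (fun x => (‖g x‖ : ℂ)) 0 = (∫ x, ‖g x‖ ∂μ : ℝ) := by
    simp only [vCoeff, vpsi_zero, map_one, mul_one]
    exact integral_ofReal
  calc ENNReal.ofReal ‖vCoeff μ g j‖ ≤ ENNReal.ofReal (∫ x, ‖g x‖ ∂μ) :=
        ENNReal.ofReal_le_ofReal (norm_vCoeff_le_integral_norm μ g j)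
    _ = ENNReal.ofReal ‖vCoeff μ (fun x => (‖g x‖ : ℂ)) 0‖ := by
        rw [hcoeff, Complex.norm_real, Real.norm_of_nonneg (integral_nonneg fun x => norm_nonneg _)]
    _ ≤ _ := ofReal_norm_vCoeff_zero_le_vHp hp _

theorem vI_eq_vCyl (hm : ∀ k, 0 < m k) (n : ℕ) : vI m n = vCyl m n (vOfNat hm 0) := by
  ext y
  simp [vI, vCyl, vOfNat, vdigit, Fin.ext_iff]

theorem measure_vI (hm : ∀ k, 0 < m k) {μ : Measure (VG m)} (hμ : isVHaar μ) (n : ℕ) :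
    μ (vI m n) = (vM m n : ℝ≥0∞)⁻¹ := by
  rw [vI_eq_vCyl hm, hμ]

theorem vD_vM (hm : ∀ k, 2 ≤ m k) (n : ℕ) (x : VG m) :
    vD m (vM m n) x = (vI m n).indicator (fun _ => (vM m n : ℂ)) x := by
  have hm₀ : ∀ k, 0 < m k := fun k => Nat.zero_lt_of_lt (hm k)
  rw [vD, sum_congr rfl fun t ht => vpsi_eq_prod hm (mem_range.1 ht) x,
    sum_range_vM_prod_vdigit hm₀ n fun k d => vExp (m k) d (x k),
    prod_congr rfl fun k _ => sum_range_vExp (x k).isLt, prod_ite_zero]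
  simp [Set.indicator_apply, vI, vM_eq_prod]

def vFA (m : ℕ → ℕ) (A : ℕ) (x : VG m) : ℂ := vD m (vM m (A + 1)) x - vD m (vM m A) x

theorem sigAbsFA_eq (μ : Measure (VG m)) (A : ℕ) :
    sigAbsFA μ A = fun x => (‖vSigma μ (vFA m A) (vM m (A + 1)) x‖ : ℂ) := rfl

theorem vFA_eq_sum (hm : ∀ k, 0 < m k) (A : ℕ) (x : VG m) :
    vFA m A x = ∑ k ∈ Ico (vM m A) (vM m (A + 1)), vpsi m k x := by
  rw [sum_Ico_eq_sub _ (vM_mono hm A.le_succ)]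
  rfl

theorem integrable_vFA (hm : ∀ k, 0 < m k) (μ : Measure (VG m)) [IsFiniteMeasure μ] (A : ℕ) :
    Integrable (vFA m A) μ := by
  rw [funext (vFA_eq_sum hm A)]
  exact integrable_finsetSum _ fun k _ => integrable_vpsi μ k

theorem vCoeff_vFA (hm : ∀ k, 2 ≤ m k) {μ : Measure (VG m)} [IsFiniteMeasure μ]
    (hμ : isVHaar μ) (A j : ℕ) :
    vCoeff μ (vFA m A) j = if j ∈ Ico (vM m A) (vM m (A + 1)) then 1 else 0 := by
  have hm₀ : ∀ k, 0 < m k := fun k => Nat.zero_lt_of_lt (hm k)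
  simpa [← vFA_eq_sum hm₀] using vCoeff_sum_vpsi hm hμ (Ico (vM m A) (vM m (A + 1))) (fun _ => 1) j

theorem vS_vFA_vM (hm : ∀ k, 2 ≤ m k) {μ : Measure (VG m)} [IsFiniteMeasure μ]
    (hμ : isVHaar μ) (A k : ℕ) : vS μ (vFA m A) (vM m k) = if A < k then vFA m A else 0 := by
  have hm₀ : ∀ k, 0 < m k := fun k => Nat.zero_lt_of_lt (hm k)
  ext x
  simp only [vS, vCoeff_vFA hm hμ, ite_mul, one_mul, zero_mul, sum_ite_mem]
  split_ifs with h
  · rw [inter_eq_right.2 fun j hj => mem_range.2 ((mem_Ico.1 hj).2.trans_le (vM_mono hm₀ h)),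
      vFA_eq_sum hm₀]
  · rw [disjoint_iff_inter_eq_empty.1 (disjoint_left.2 fun j hj hj' =>
      (mem_range.1 hj).not_ge ((vM_mono hm₀ (not_lt.1 h)).trans (mem_Ico.1 hj').1)), sum_empty]
    rfl

theorem norm_vFA_le (hm : ∀ k, 2 ≤ m k) (A : ℕ) (x : VG m) :
    ‖vFA m A x‖ ≤ (vI m A).indicator (fun _ => (vM m (A + 1) : ℝ)) x := by
  have hm₀ : ∀ k, 0 < m k := fun k => Nat.zero_lt_of_lt (hm k)
  have hle : vM m A ≤ vM m (A + 1) := vM_mono hm₀ A.le_succ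
  have hsub : vI m (A + 1) ⊆ vI m A := fun y hy i hi => hy i (by omega)
  rw [vFA, vD_vM hm, vD_vM hm]
  by_cases h₁ : x ∈ vI m (A + 1)
  · rw [Set.indicator_of_mem h₁, Set.indicator_of_mem (hsub h₁), Set.indicator_of_mem (hsub h₁),
      ← Nat.cast_sub hle, Complex.norm_natCast]
    exact_mod_cast Nat.sub_le _ _
  · by_cases h₀ : x ∈ vI m A
    · rw [Set.indicator_of_notMem h₁, Set.indicator_of_mem h₀, Set.indicator_of_mem h₀, zero_sub,
        norm_neg, Complex.norm_natCast]
      exact_mod_cast hle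
    · simp [h₀, h₁]

theorem norm_vS_vFA_vM_le (hm : ∀ k, 2 ≤ m k) {μ : Measure (VG m)} [IsFiniteMeasure μ]
    (hμ : isVHaar μ) (A k : ℕ) (x : VG m) : ‖vS μ (vFA m A) (vM m k) x‖ ≤ ‖vFA m A x‖ := by
  rw [vS_vFA_vM hm hμ]
  split_ifs <;> simp

theorem vHp_vFA_le (hm : ∀ k, 2 ≤ m k) {μ : Measure (VG m)} [IsFiniteMeasure μ]
    (hμ : isVHaar μ) {p : ℝ} (hp : 0 < p) (A : ℕ) :
    vHp μ p (vFA m A) ≤ m A * (vM m A : ℝ≥0∞) ^ (1 - 1 / p) := by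
  have hm₀ : ∀ k, 0 < m k := fun k => Nat.zero_lt_of_lt (hm k)
  have hI : MeasurableSet (vI m A) := vI_eq_vCyl hm₀ A ▸ measurableSet_vCyl A _
  have hM₀ : (vM m A : ℝ≥0∞) ≠ 0 := by exact_mod_cast (vM_pos hm₀ A).ne'
  have hmaximal : ∀ x, (⨆ k, ENNReal.ofReal ‖vS μ (vFA m A) (vM m k) x‖) ^ p ≤
      (vI m A).indicator (fun _ => (vM m (A + 1) : ℝ≥0∞) ^ p) x := by
    intro x
    calc (⨆ k, ENNReal.ofReal ‖vS μ (vFA m A) (vM m k) x‖) ^ p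
        ≤ ENNReal.ofReal ((vI m A).indicator (fun _ => (vM m (A + 1) : ℝ)) x) ^ p := by
          gcongr
          exact iSup_le fun k => ENNReal.ofReal_le_ofReal
            ((norm_vS_vFA_vM_le hm hμ A k x).trans (norm_vFA_le hm A x))
      _ = (vI m A).indicator (fun _ => (vM m (A + 1) : ℝ≥0∞) ^ p) x := by
          by_cases hx : x ∈ vI m A <;> simp [hx, ENNReal.zero_rpow_of_pos hp]
  calc vHp μ p (vFA m A)
      ≤ (∫⁻ x, (vI m A).indicator (fun _ => (vM m (A + 1) : ℝ≥0∞) ^ p) x ∂μ) ^ (1 / p) := by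
        unfold vHp
        gcongr with x
        exact hmaximal x
    _ = vM m (A + 1) * (vM m A : ℝ≥0∞)⁻¹ ^ (1 / p) := by
        rw [lintegral_indicator_const hI, measure_vI hm₀ hμ,
          ENNReal.mul_rpow_of_nonneg _ _ (by positivity), ← ENNReal.rpow_mul,
          mul_one_div_cancel hp.ne', ENNReal.rpow_one]
    _ = m A * (vM m A : ℝ≥0∞) ^ (1 - 1 / p) := by
        rw [vM_succ, Nat.cast_mul, mul_assoc, sub_eq_add_neg, ENNReal.rpow_add _ _ hM₀ (by simp),
          ENNReal.rpow_one, ENNReal.rpow_neg, ENNReal.inv_rpow]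

theorem rpow_mul_vHp_vFA_le (hm : ∀ k, 2 ≤ m k) {μ : Measure (VG m)} [IsFiniteMeasure μ]
    (hμ : isVHaar μ) {p : ℝ} (hp : 0 < p) (A : ℕ) :
    (vM m A : ℝ≥0∞) ^ (1 / p - 1) * vHp μ p (vFA m A) ≤ m A := by
  have hM₀ : (vM m A : ℝ≥0∞) ≠ 0 := by
    exact_mod_cast (vM_pos (fun k => Nat.zero_lt_of_lt (hm k)) A).ne'
  calc (vM m A : ℝ≥0∞) ^ (1 / p - 1) * vHp μ p (vFA m A)
      ≤ (vM m A : ℝ≥0∞) ^ (1 / p - 1) * (m A * (vM m A : ℝ≥0∞) ^ (1 - 1 / p)) := by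
        gcongr
        exact vHp_vFA_le hm hμ hp A
    _ = m A := by
        rw [mul_left_comm, ← ENNReal.rpow_add _ _ hM₀ (by simp),
          show 1 / p - 1 + (1 - 1 / p) = 0 by ring, ENNReal.rpow_zero, mul_one]

theorem two_inv_le_vHp_sigAbsFA (hm : ∀ k, 2 ≤ m k) {μ : Measure (VG m)} [IsProbabilityMeasure μ]
    (hμ : isVHaar μ) {p : ℝ} (hp : 0 < p) (A : ℕ) : 2⁻¹ ≤ vHp μ p (sigAbsFA μ A) := by
  have hm₀ : ∀ k, 0 < m k := fun k => Nat.zero_lt_of_lt (hm k)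
  have hA : vM m A < vM m (A + 1) := by
    rw [vM_succ]
    exact lt_mul_left (vM_pos hm₀ A) (hm A)
  have hdouble : 2 * (vM m A : ℝ) ≤ vM m (A + 1) := by
    rw [vM_succ, Nat.cast_mul]
    gcongr
    exact_mod_cast hm A
  rw [sigAbsFA_eq]
  refine le_trans ?_ (ofReal_norm_vCoeff_le_vHp_norm hp _ (vM m A))
  rw [vCoeff_vSigma hm hμ, vCoeff_vFA hm hμ, if_pos (left_mem_Ico.2 hA), mul_one, norm_div,
    Complex.norm_natCast, Complex.norm_natCast, Nat.cast_sub hA.le, ← ENNReal.ofReal_ofNat,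
    ← ENNReal.ofReal_inv_of_pos two_pos]
  apply ENNReal.ofReal_le_ofReal
  rw [le_div_iff₀ (by exact_mod_cast vM_pos hm₀ (A + 1))]
  linarith

theorem tendsto_vM_rpow_of_neg (hm : ∀ k, 2 ≤ m k) {r : ℝ} (hr : r < 0) :
    Tendsto (fun n => (vM m n : ℝ≥0∞) ^ r) atTop (nhds 0) := by
  have hM : Tendsto (fun n => (vM m n : ℝ≥0∞)) atTop (nhds ⊤) :=
    ENNReal.tendsto_nat_nhds_top.comp (tendsto_atTop_mono (fun n => (lt_vM hm n).le) tendsto_id)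
  simpa [ENNReal.top_rpow_of_neg hr, Function.comp_def] using
    ((ENNReal.continuous_rpow_const (y := r)).tendsto ⊤).comp hM

/-- for `0 < p < 1`,
`‖sup_N S_{M_N}(|σ_{M_{A+1}} f_A|)‖_p ≥ c_p M_A^{1/p-1} ‖f_A‖_{H_p}`, hence
`f ↦ |σ_{M_n} f|` is not bounded on `H_p`. -/
theorem sigma_abs_not_bounded_Hp (m : ℕ → ℕ) (hm : ∀ k, 2 ≤ m k) (hb : ∃ B, ∀ k, m k ≤ B)
    (μ : Measure (VG m)) [IsProbabilityMeasure μ] (hμ : isVHaar μ)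
    (p : ℝ) (hp0 : 0 < p) (hp1 : p < 1) :
    (∃ c : ℝ≥0∞, 0 < c ∧ ∀ A : ℕ,
      c * (vM m A : ℝ≥0∞) ^ (1 / p - 1) *
          vHp μ p (fun x => vD m (vM m (A + 1)) x - vD m (vM m A) x) ≤
        vHp μ p (sigAbsFA μ A)) ∧
    ¬ ∃ C : ℝ≥0, ∀ f : VG m → ℂ, Integrable f μ → ∀ n : ℕ,
        vHp μ p (fun x => ((‖vSigma μ f (vM m n) x‖ : ℝ) : ℂ)) ≤ C * vHp μ p f := by
  obtain ⟨B, hB⟩ := hb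
  have hB₀ : (B : ℝ≥0∞) ≠ 0 := by exact_mod_cast (Nat.zero_lt_of_lt ((hm 0).trans (hB 0))).ne'
  have hσ : ∀ A, 2⁻¹ ≤ vHp μ p (sigAbsFA μ A) := two_inv_le_vHp_sigAbsFA hm hμ hp0
  refine ⟨⟨2⁻¹ * (B : ℝ≥0∞)⁻¹, by simp, fun A => ?_⟩, ?_⟩
  · calc 2⁻¹ * (B : ℝ≥0∞)⁻¹ * (vM m A : ℝ≥0∞) ^ (1 / p - 1) * vHp μ p (vFA m A)
        = 2⁻¹ * (B : ℝ≥0∞)⁻¹ * ((vM m A : ℝ≥0∞) ^ (1 / p - 1) * vHp μ p (vFA m A)) := by ring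
      _ ≤ 2⁻¹ * (B : ℝ≥0∞)⁻¹ * B := by
        gcongr
        exact (rpow_mul_vHp_vFA_le hm hμ hp0 A).trans (by exact_mod_cast hB A)
      _ = 2⁻¹ := by rw [mul_assoc, ENNReal.inv_mul_cancel hB₀ (by simp), mul_one]
      _ ≤ vHp μ p (sigAbsFA μ A) := hσ A
  · rintro ⟨C, hC⟩
    have hbound : ∀ A, 2⁻¹ ≤ C * B * (vM m A : ℝ≥0∞) ^ (1 - 1 / p) := fun A =>
      calc 2⁻¹ ≤ vHp μ p (sigAbsFA μ A) := hσ A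
        _ ≤ C * vHp μ p (vFA m A) :=
          hC _ (integrable_vFA (fun k => Nat.zero_lt_of_lt (hm k)) μ A) (A + 1)
        _ ≤ C * (m A * (vM m A : ℝ≥0∞) ^ (1 - 1 / p)) := by gcongr; exact vHp_vFA_le hm hμ hp0 A
        _ ≤ C * B * (vM m A : ℝ≥0∞) ^ (1 - 1 / p) := by rw [← mul_assoc]; gcongr; exact hB A
    have hlim := ENNReal.Tendsto.const_mul (a := C * B)
      (tendsto_vM_rpow_of_neg hm (by rwa [sub_neg, one_lt_div hp0] : 1 - 1 / p < 0))
      (Or.inr (ENNReal.mul_ne_top (by simp) (by simp)))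
    rw [mul_zero] at hlim
    exact absurd (ge_of_tendsto' hlim hbound) (by simp)

end
end
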